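/- Let (𝒪,𝒜,T,e,≼) be a Direct Preference Process, φ: ℋ → 𝒳 a feature map, and (γ_t)_{t=1}^{T−1} nonnegative weights not all zero. The following are equivalent: (i) ≼ embeds via (φ,γ)-frequency into a total convex preorder ≼∘ on Dist(𝒳×𝒜) satisfying interpolation; (ii) there exists r: 𝒳×𝒜 → ℝ such that for all trajectory distributions D, D', D ≼ D' ⟺ 𝔼_D[Σ_{t=1}^{T−1} γ_t r(X_t, A_t)] ≤ 𝔼_{D'}[Σ_{t=1}^{T−1} γ_t r(X_t, A_t)], where (X_t, A_t) is the feature-action pair at time t. -/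

import Mathlib

open Finset

/-- A history: an initial observation together with a list of action-observation pairs. -/
abbrev Hist (O A : Type*) := O × List (A × O)

/-- The length (time index) of a history. -/
def hlen {O A : Type*} (h : Hist O A) : ℕ := h.2.length

/-- Append an action-observation pair to a history. -/
def hext {O A : Type*} (h : Hist O A) (a : A) (o : O) : Hist O A :=
  (h.1, h.2 ++ [(a, o)])

/-- The length-`t` prefix of a history/trajectory. -/
def hpre {O A : Type*} (h : Hist O A) (t : ℕ) : Hist O A := (h.1, h.2.take t)

section DPP

variable {O A : Type*} [Fintype O] [Fintype A] [DecidableEq O] [DecidableEq A]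

/-- The finite set of all length-`T` histories (trajectories). -/
def trajFinset (O A : Type*) [Fintype O] [Fintype A] [DecidableEq O] [DecidableEq A]
    (T : ℕ) : Finset (Hist O A) :=
  Finset.image (fun p : O × (Fin T → A × O) => ((p.1, List.ofFn p.2) : Hist O A))
    Finset.univ

/-- `π` is a policy: a distribution over actions for each history. -/
def IsPolicy (π : Hist O A → A → ℝ) : Prop :=
  ∀ h, (∀ a, 0 ≤ π h a) ∧ ∑ a, π h a = 1

/-- `(ρ0, ρ)` is an environment: an initial observation distribution and
history-dependent transition probabilities. -/
def IsEnv (ρ0 : O → ℝ) (ρ : Hist O A → A → O → ℝ) : Prop :=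
  ((∀ o, 0 ≤ ρ0 o) ∧ ∑ o, ρ0 o = 1) ∧
    ∀ h a, (∀ o, 0 ≤ ρ h a o) ∧ ∑ o, ρ h a o = 1

/-- `Dpi ρ π n h` : the distribution over trajectories induced by starting at `h`
(with `n` steps remaining) and following policy `π` in environment `ρ`. -/
noncomputable def Dpi (ρ : Hist O A → A → O → ℝ) (π : Hist O A → A → ℝ) :
    ℕ → Hist O A → Hist O A → ℝ
  | 0, h, ω => if ω = h then 1 else 0
  | n + 1, h, ω => ∑ a, π h a * ∑ o, ρ h a o * Dpi ρ π n (hext h a o) ω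

/-- `D^π(h)` with horizon `T`. -/
noncomputable def DpiH (T : ℕ) (ρ : Hist O A → A → O → ℝ) (π : Hist O A → A → ℝ)
    (h : Hist O A) : Hist O A → ℝ :=
  Dpi ρ π (T - hlen h) h

/-- `D^π(h · a)` : take action `a` at `h`, then follow `π`. -/
noncomputable def DpiA (T : ℕ) (ρ : Hist O A → A → O → ℝ) (π : Hist O A → A → ℝ)
    (h : Hist O A) (a : A) : Hist O A → ℝ :=
  fun ω => ∑ o, ρ h a o * Dpi ρ π (T - hlen h - 1) (hext h a o) ω

/-- Attainable histories in environment `(ρ0, ρ)`. -/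
inductive Attainable (ρ0 : O → ℝ) (ρ : Hist O A → A → O → ℝ) : Hist O A → Prop
  | base (o : O) : 0 < ρ0 o → Attainable ρ0 ρ (o, ([] : List (A × O)))
  | step (h : Hist O A) (a : A) (o : O) :
      Attainable ρ0 ρ h → 0 < ρ h a o → Attainable ρ0 ρ (hext h a o)

/-- A distribution over trajectories (length-`T` histories). -/
def IsTrajDist (T : ℕ) (D : Hist O A → ℝ) : Prop :=
  (∀ ω, 0 ≤ D ω) ∧ (∀ ω, D ω ≠ 0 → hlen ω = T) ∧
    ∑ ω ∈ trajFinset O A T, D ω = 1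

/-- A distribution over the attainable trajectories `Ω^e`. -/
def IsAttDist (T : ℕ) (ρ0 : O → ℝ) (ρ : Hist O A → A → O → ℝ)
    (D : Hist O A → ℝ) : Prop :=
  IsTrajDist T D ∧ ∀ ω, D ω ≠ 0 → Attainable ρ0 ρ ω

/-- Pointwise convex combination. -/
def mix {X : Type*} (α : ℝ) (A B : X → ℝ) : X → ℝ :=
  fun x => α * A x + (1 - α) * B x

/-- The restriction of `R` to `Dist(Ω^e)` is a total consistent preorder. -/
def RestrTotalConsistentPreorder (T : ℕ) (ρ0 : O → ℝ)
    (ρ : Hist O A → A → O → ℝ) (R : (Hist O A → ℝ) → (Hist O A → ℝ) → Prop) : Prop :=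
  (∀ D, IsAttDist T ρ0 ρ D → R D D) ∧
  (∀ D₁ D₂ D₃, IsAttDist T ρ0 ρ D₁ → IsAttDist T ρ0 ρ D₂ → IsAttDist T ρ0 ρ D₃ →
    R D₁ D₂ → R D₂ D₃ → R D₁ D₃) ∧
  (∀ D₁ D₂, IsAttDist T ρ0 ρ D₁ → IsAttDist T ρ0 ρ D₂ → (R D₁ D₂ ∨ R D₂ D₁)) ∧
  (∀ α : ℝ, 0 < α → α < 1 → ∀ D₁ D₂ D₃, IsAttDist T ρ0 ρ D₁ →
    IsAttDist T ρ0 ρ D₂ → IsAttDist T ρ0 ρ D₃ →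
    R D₁ D₂ → R (mix α D₁ D₃) (mix α D₂ D₃))

/-- `π` is a `≼`-optimal policy. -/
def OptimalPolicy (T : ℕ) (ρ0 : O → ℝ) (ρ : Hist O A → A → O → ℝ)
    (R : (Hist O A → ℝ) → (Hist O A → ℝ) → Prop) (π : Hist O A → A → ℝ) : Prop :=
  ∀ h, Attainable ρ0 ρ h → hlen h ≤ T →
    ∀ π', IsPolicy π' → R (DpiH T ρ π' h) (DpiH T ρ π h)

/-- The optimal action set of policy `π` at history `h`. -/
def OptActions (T : ℕ) (ρ : Hist O A → A → O → ℝ)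
    (R : (Hist O A → ℝ) → (Hist O A → ℝ) → Prop) (π : Hist O A → A → ℝ)
    (h : Hist O A) : Set A :=
  {a | ∀ a', R (DpiA T ρ π h a') (DpiA T ρ π h a)}

end DPP

/-- `p` is a probability mass function on the finite type `Y`. -/
def IsDist {Y : Type*} [Fintype Y] (p : Y → ℝ) : Prop :=
  (∀ y, 0 ≤ p y) ∧ ∑ y, p y = 1

/-- The feature-action pair visited at time `t` along trajectory `ω`. -/
def featAct {O A X : Type*} [Inhabited A] [Inhabited O] (φ : Hist O A → X)
    (ω : Hist O A) (t : ℕ) : X × A :=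
  (φ (hpre ω t), (ω.2.getD t default).1)

/-- `ℙ_D((X_t, A_t) = (x,a))` under trajectory distribution `D`. -/
noncomputable def probFA {O A X : Type*} [Fintype O] [Fintype A] [DecidableEq O]
    [DecidableEq A] [DecidableEq X] [DecidableEq (X × A)] [Inhabited A] [Inhabited O]
    (T : ℕ) (φ : Hist O A → X) (D : Hist O A → ℝ) (t : ℕ) (xa : X × A) : ℝ :=
  ∑ ω ∈ trajFinset O A T, D ω * (if featAct φ ω t = xa then 1 else 0)

/-- The `(φ,γ)`-frequency `f^{(φ,γ)}(·|D)` over feature-action pairs,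
with weights `(γ_t)_{t=1}^{T-1}`. -/
noncomputable def freqFA {O A X : Type*} [Fintype O] [Fintype A] [DecidableEq O]
    [DecidableEq A] [DecidableEq X] [DecidableEq (X × A)] [Inhabited A] [Inhabited O]
    (T : ℕ) (φ : Hist O A → X) (γ : ℕ → ℝ) (D : Hist O A → ℝ) (xa : X × A) : ℝ :=
  (∑ t ∈ Finset.Ico 1 T, γ t)⁻¹ * ∑ t ∈ Finset.Ico 1 T, γ t * probFA T φ D t xa

/-!
Expected reward along a trajectory distribution is, up to the positive factor `∑ γ_t`, the
expectation of `r` under the `(φ,γ)`-frequency. So (ii) gives (i) with `≼∘` the order of expected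
`r`, and (i) gives (ii) once `≼∘` is known to be an expected-utility order: this is the
von Neumann–Morgenstern theorem on the simplex `Dist(𝒳 × 𝒜)`. For the latter, the best and worst
vertices `b`, `w` bound every lottery; interpolation calibrates each `p` against a mixture
`t b + (1 - t) w`, independence makes the calibration `t` affine in `p`, and an affine function on
the simplex is determined by its values at the vertices.
-/

theorem exists_forall_rel_of_total {ι : Type*} [Finite ι] [Nonempty ι] {r : ι → ι → Prop}
    (total : ∀ i j, r i j ∨ r j i) (trans : ∀ i j k, r i j → r j k → r i k) :
    ∃ b, ∀ i, r i b := by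
  classical
  have := Fintype.ofFinite ι
  -- if `i` were not below `b`, strictly more elements would lie below `i` than below `b`
  obtain ⟨b, hb⟩ := Finite.exists_max fun b => #{i | r i b}
  refine ⟨b, fun i => by_contra fun hib => (hb i).not_gt (card_lt_card ?_)⟩
  have hbi : r b i := (total i b).resolve_left hib
  refine ssubset_iff_of_subset (fun j hj => ?_) |>.2 ⟨i, ?_, ?_⟩
  · simp only [mem_filter, mem_univ, true_and] at hj ⊢
    exact trans j b i hj hbi
  · simpa using (total i i).elim id id
  · simpa using hib

section Mix

variable {Y : Type*}

theorem mix_eq_smul_add_smul (α : ℝ) (p q : Y → ℝ) : mix α p q = α • p + (1 - α) • q := rfl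

theorem mix_swap (α : ℝ) (p q : Y → ℝ) : mix α p q = mix (1 - α) q p := by
  funext y; simp only [mix]; ring

@[simp] theorem mix_self (α : ℝ) (p : Y → ℝ) : mix α p p = p := by
  funext y; simp only [mix]; ring

@[simp] theorem mix_zero (p q : Y → ℝ) : mix 0 p q = q := by
  funext y; simp [mix]

@[simp] theorem mix_one (p q : Y → ℝ) : mix 1 p q = p := by
  funext y; simp [mix]

variable [Fintype Y]

theorem mix_dotProduct (α : ℝ) (p q u : Y → ℝ) :
    mix α p q ⬝ᵥ u = α * (p ⬝ᵥ u) + (1 - α) * (q ⬝ᵥ u) := by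
  simp only [mix_eq_smul_add_smul, add_dotProduct, smul_dotProduct, smul_eq_mul]

end Mix

section VonNeumannMorgenstern

variable {Y : Type*} [Fintype Y]

theorem isDist_iff_mem_stdSimplex {p : Y → ℝ} : IsDist p ↔ p ∈ stdSimplex ℝ Y := Iff.rfl

theorem isDist_single [DecidableEq Y] (y : Y) : IsDist (Pi.single y (1 : ℝ)) :=
  single_mem_stdSimplex ℝ y

theorem IsDist.mix {α : ℝ} {p q : Y → ℝ} (hp : IsDist p) (hq : IsDist q) (h0 : 0 ≤ α)
    (h1 : α ≤ 1) : IsDist (mix α p q) :=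
  convex_stdSimplex ℝ Y hp hq h0 (sub_nonneg.2 h1) (add_sub_cancel α 1)

theorem isDist_induction [DecidableEq Y] {P : (Y → ℝ) → Prop}
    (h_single : ∀ y, P (Pi.single y 1))
    (h_mix : ∀ α p q, 0 < α → α < 1 → IsDist p → IsDist q → P p → P q → P (mix α p q))
    {p : Y → ℝ} (hp : IsDist p) : P p := by
  have hconv : Convex ℝ {p | IsDist p ∧ P p} := by
    rintro p ⟨hp, hPp⟩ q ⟨hq, hPq⟩ a b ha hb hab
    obtain rfl : b = 1 - a := by linarith
    refine ⟨hp.mix hq ha (by linarith), ?_⟩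
    rcases ha.eq_or_lt with rfl | ha
    · simpa using hPq
    rcases (show a ≤ 1 by linarith).eq_or_lt with rfl | ha1
    · simpa using hPp
    exact h_mix a p q ha ha1 hp hq hPp hPq
  have hsingle : Set.range (fun y : Y => Pi.single y (1 : ℝ)) ⊆ {p | IsDist p ∧ P p} := by
    rintro _ ⟨y, rfl⟩
    exact ⟨isDist_single y, h_single y⟩
  rw [isDist_iff_mem_stdSimplex, ← convexHull_rangle_single_eq_stdSimplex] at hp
  exact (convexHull_min hsingle hconv hp).2

theorem eq_dotProduct_of_affine [DecidableEq Y] {U : (Y → ℝ) → ℝ}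
    (hU : ∀ α p q, 0 < α → α < 1 → IsDist p → IsDist q →
      U (mix α p q) = α * U p + (1 - α) * U q)
    {p : Y → ℝ} (hp : IsDist p) : U p = p ⬝ᵥ fun y => U (Pi.single y 1) :=
  isDist_induction (P := fun p => U p = p ⬝ᵥ fun y => U (Pi.single y 1))
    (fun y => by rw [single_dotProduct, one_mul])
    (fun α p q hα0 hα1 hp hq hUp hUq => by rw [hU α p q hα0 hα1 hp hq, hUp, hUq, mix_dotProduct])
    hp

structure IsVNMPreorder (R : (Y → ℝ) → (Y → ℝ) → Prop) : Prop where
  refl {p} : IsDist p → R p p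
  trans {p q s} : IsDist p → IsDist q → IsDist s → R p q → R q s → R p s
  total {p q} : IsDist p → IsDist q → R p q ∨ R q p
  indep {α : ℝ} : 0 < α → α < 1 → ∀ {p q s}, IsDist p → IsDist q → IsDist s →
    (R p q ↔ R (mix α p s) (mix α q s))
  interp {p q s} : IsDist p → IsDist q → IsDist s → R p q → R q s →
    ∃ α : ℝ, 0 ≤ α ∧ α ≤ 1 ∧ R (mix α p s) q ∧ R q (mix α p s)

theorem isVNMPreorder_dotProduct (u : Y → ℝ) :
    IsVNMPreorder fun p q : Y → ℝ => p ⬝ᵥ u ≤ q ⬝ᵥ u where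
  refl _ := le_rfl
  trans _ _ _ := le_trans
  total _ _ := le_total _ _
  indep hα _ _ _ _ _ _ _ := by
    rw [mix_dotProduct, mix_dotProduct, add_le_add_iff_right, mul_le_mul_iff_right₀ hα]
  interp {p q s} _ _ _ hpq hqs := by
    have hseg : q ⬝ᵥ u ∈ segment ℝ (p ⬝ᵥ u) (s ⬝ᵥ u) := by
      rw [segment_eq_Icc (hpq.trans hqs)]; exact ⟨hpq, hqs⟩
    obtain ⟨α, β, hα, hβ, hαβ, h⟩ := hseg
    obtain rfl : β = 1 - α := by linarith
    simp only [smul_eq_mul] at h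
    exact ⟨α, hα, by linarith, by rw [mix_dotProduct, h], by rw [mix_dotProduct, h]⟩

namespace IsVNMPreorder

variable {R : (Y → ℝ) → (Y → ℝ) → Prop} {p q : Y → ℝ}

theorem dual (hR : IsVNMPreorder R) : IsVNMPreorder (flip R) where
  refl := hR.refl
  trans hp hq hs hpq hqs := hR.trans hs hq hp hqs hpq
  total hp hq := hR.total hq hp
  indep hα hα1 _ _ _ hp hq hs := hR.indep hα hα1 hq hp hs
  interp hp hq hs hpq hqs := by
    obtain ⟨α, h0, h1, hle, hge⟩ := hR.interp hs hq hp hqs hpq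
    refine ⟨1 - α, by linarith, by linarith, ?_, ?_⟩ <;> rwa [mix_swap, sub_sub_cancel]

theorem mix_le_mix (hR : IsVNMPreorder R) {α : ℝ} (hα0 : 0 < α) (hα1 : α < 1)
    {p' q' : Y → ℝ} (hp : IsDist p) (hp' : IsDist p') (hq : IsDist q) (hq' : IsDist q')
    (hpp' : R p p') (hqq' : R q q') : R (mix α p q) (mix α p' q') := by
  refine hR.trans (hp.mix hq hα0.le hα1.le) (hp'.mix hq hα0.le hα1.le)
    (hp'.mix hq' hα0.le hα1.le) ((hR.indep hα0 hα1 hp hp' hq).1 hpp') ?_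
  rw [mix_swap α p' q, mix_swap α p' q']
  exact (hR.indep (by linarith) (by linarith) hq hq' hp').1 hqq'

theorem le_of_forall_single_le [DecidableEq Y] (hR : IsVNMPreorder R) (hq : IsDist q)
    (h : ∀ y, R (Pi.single y 1) q) (hp : IsDist p) : R p q :=
  isDist_induction (P := fun p => R p q) h (fun α p p' hα0 hα1 hp hp' hpq hp'q => by
    rw [← mix_self α q]; exact hR.mix_le_mix hα0 hα1 hp hq hp' hq hpq hp'q) hp

theorem not_le_mix_left (hR : IsVNMPreorder R) (hp : IsDist p) (hq : IsDist q)
    (hpq : ¬R p q) {α : ℝ} (h0 : 0 ≤ α) (h1 : α < 1) : ¬R p (mix α p q) := by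
  rcases h0.eq_or_lt with rfl | h0
  · simpa using hpq
  rw [mix_swap]
  exact fun h => hpq ((hR.indep (α := 1 - α) (by linarith) (by linarith) hp hq hp).2
    (by rwa [mix_self]))

theorem not_mix_le_right (hR : IsVNMPreorder R) (hp : IsDist p) (hq : IsDist q)
    (hpq : ¬R p q) {α : ℝ} (h0 : 0 < α) (h1 : α ≤ 1) : ¬R (mix α p q) q := by
  rcases h1.eq_or_lt with rfl | h1
  · simpa using hpq
  exact fun h => hpq ((hR.indep h0 h1 hp hq hq).2 (by rwa [mix_self]))

theorem not_mix_le_mix (hR : IsVNMPreorder R) (hp : IsDist p) (hq : IsDist q)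
    (hpq : ¬R p q) {s t : ℝ} (ht : 0 ≤ t) (hts : t < s) (hs : s ≤ 1) :
    ¬R (mix s p q) (mix t p q) := by
  have hs0 : 0 < s := ht.trans_lt hts
  have hmix : mix t p q = mix (t / s) (mix s p q) q := by
    funext y; simp only [mix]; field_simp; ring
  rw [hmix]
  exact hR.not_le_mix_left (hp.mix hq hs0.le hs) hq (hR.not_mix_le_right hp hq hpq hs0 hs)
    (div_nonneg ht hs0.le) ((div_lt_one hs0).2 hts)

theorem mix_le_mix_iff (hR : IsVNMPreorder R) (hp : IsDist p) (hq : IsDist q)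
    (hpq : ¬R p q) {s t : ℝ} (hs : s ∈ Set.Icc (0 : ℝ) 1) (ht : t ∈ Set.Icc (0 : ℝ) 1) :
    R (mix s p q) (mix t p q) ↔ s ≤ t := by
  refine ⟨fun h => not_lt.1 fun hts => hR.not_mix_le_mix hp hq hpq ht.1 hts hs.2 h,
    fun hst => ?_⟩
  rcases hst.eq_or_lt with rfl | hst
  · exact hR.refl (hp.mix hq hs.1 hs.2)
  · exact (hR.total (hp.mix hq hs.1 hs.2) (hp.mix hq ht.1 ht.2)).resolve_right
      (hR.not_mix_le_mix hp hq hpq hs.1 hst ht.2)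

theorem exists_affine_utility_of_bounds (hR : IsVNMPreorder R) (hp : IsDist p)
    (hq : IsDist q) (hpq : ¬R p q) (hub : ∀ x, IsDist x → R x p)
    (hlb : ∀ x, IsDist x → R q x) :
    ∃ U : (Y → ℝ) → ℝ, (∀ x y, IsDist x → IsDist y → (R x y ↔ U x ≤ U y)) ∧
      ∀ α x y, 0 < α → α < 1 → IsDist x → IsDist y →
        U (mix α x y) = α * U x + (1 - α) * U y := by
  have hm : ∀ t ∈ Set.Icc (0 : ℝ) 1, IsDist (mix t p q) := fun t ht => hp.mix hq ht.1 ht.2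
  have hcalib : ∀ x, IsDist x →
      ∃ t ∈ Set.Icc (0 : ℝ) 1, R (mix t p q) x ∧ R x (mix t p q) := by
    intro x hx
    obtain ⟨α, h0, h1, hle, hge⟩ := hR.interp hq hx hp (hlb x hx) (hub x hx)
    rw [mix_swap] at hle hge
    exact ⟨1 - α, ⟨by linarith, by linarith⟩, hle, hge⟩
  choose! U hU hU_le hU_ge using hcalib
  have hrep : ∀ x y, IsDist x → IsDist y → (R x y ↔ U x ≤ U y) := by
    intro x y hx hy
    have hmx := hm _ (hU x hx)
    have hmy := hm _ (hU y hy)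
    rw [← hR.mix_le_mix_iff hp hq hpq (hU x hx) (hU y hy)]
    exact ⟨fun h => hR.trans hmx hx hmy (hU_le x hx) (hR.trans hx hy hmy h (hU_ge y hy)),
      fun h => hR.trans hx hmx hy (hU_ge x hx) (hR.trans hmx hmy hy h (hU_le y hy))⟩
  refine ⟨U, hrep, fun α x y hα0 hα1 hx hy => ?_⟩
  set c := α * U x + (1 - α) * U y
  have hc : c ∈ Set.Icc (0 : ℝ) 1 := by
    obtain ⟨hx0, hx1⟩ := hU x hx
    obtain ⟨hy0, hy1⟩ := hU y hy
    constructor <;> nlinarith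
  have hxy := hx.mix hy hα0.le hα1.le
  have hmix : mix α (mix (U x) p q) (mix (U y) p q) = mix c p q := by
    funext z; simp only [mix, c]; ring
  have hle : R (mix α x y) (mix c p q) := hmix ▸ hR.mix_le_mix hα0 hα1 hx (hm _ (hU x hx))
    hy (hm _ (hU y hy)) (hU_ge x hx) (hU_ge y hy)
  have hge : R (mix c p q) (mix α x y) := hmix ▸ hR.mix_le_mix hα0 hα1 (hm _ (hU x hx)) hx
    (hm _ (hU y hy)) hy (hU_le x hx) (hU_le y hy)
  apply le_antisymm
  · rw [← hR.mix_le_mix_iff hp hq hpq (hU _ hxy) hc]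
    exact hR.trans (hm _ (hU _ hxy)) hxy (hm _ hc) (hU_le _ hxy) hle
  · rw [← hR.mix_le_mix_iff hp hq hpq hc (hU _ hxy)]
    exact hR.trans (hm _ hc) hxy (hm _ (hU _ hxy)) hge (hU_ge _ hxy)

theorem exists_dotProduct_le_iff [Nonempty Y] [DecidableEq Y] (hR : IsVNMPreorder R) :
    ∃ u : Y → ℝ, ∀ p q, IsDist p → IsDist q → (R p q ↔ p ⬝ᵥ u ≤ q ⬝ᵥ u) := by
  obtain ⟨b, hb⟩ := exists_forall_rel_of_total (r := fun y z => R (Pi.single y 1) (Pi.single z 1))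
    (fun y z => hR.total (isDist_single y) (isDist_single z))
    (fun x y z => hR.trans (isDist_single x) (isDist_single y) (isDist_single z))
  obtain ⟨w, hw⟩ := exists_forall_rel_of_total (r := fun y z => R (Pi.single z 1) (Pi.single y 1))
    (fun y z => hR.total (isDist_single z) (isDist_single y))
    (fun x y z hxy hyz => hR.trans (isDist_single z) (isDist_single y) (isDist_single x) hyz hxy)
  have hub : ∀ x, IsDist x → R x (Pi.single b 1) :=
    fun x hx => hR.le_of_forall_single_le (isDist_single b) hb hx
  have hlb : ∀ x, IsDist x → R (Pi.single w 1) x :=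
    fun x hx => hR.dual.le_of_forall_single_le (isDist_single w) hw hx
  by_cases hbw : R (Pi.single b 1) (Pi.single w 1)
  · refine ⟨0, fun p q hp hq => ?_⟩
    simp only [dotProduct_zero, le_refl, iff_true]
    exact hR.trans hp (isDist_single b) hq (hub p hp)
      (hR.trans (isDist_single b) (isDist_single w) hq hbw (hlb q hq))
  · obtain ⟨U, hrep, haff⟩ := hR.exists_affine_utility_of_bounds (isDist_single b)
      (isDist_single w) hbw hub hlb
    refine ⟨fun y => U (Pi.single y 1), fun p q hp hq => ?_⟩
    rw [hrep p q hp hq, eq_dotProduct_of_affine haff hp, eq_dotProduct_of_affine haff hq]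

end IsVNMPreorder

end VonNeumannMorgenstern

section Frequency

variable {O A X : Type*} [Fintype O] [Fintype A] [Fintype X] [DecidableEq O] [DecidableEq A]
  [DecidableEq X] [Inhabited A] [Inhabited O]

theorem probFA_dotProduct (T : ℕ) (φ : Hist O A → X) (D : Hist O A → ℝ) (t : ℕ)
    (r : X × A → ℝ) :
    probFA T φ D t ⬝ᵥ r = ∑ ω ∈ trajFinset O A T, D ω * r (featAct φ ω t) := by
  simp only [dotProduct, probFA, sum_mul, mul_assoc]
  rw [sum_comm]
  simp [ite_mul]

theorem freqFA_dotProduct (T : ℕ) (φ : Hist O A → X) (γ : ℕ → ℝ) (D : Hist O A → ℝ)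
    (r : X × A → ℝ) :
    freqFA T φ γ D ⬝ᵥ r = (∑ t ∈ Ico 1 T, γ t)⁻¹ *
      ∑ ω ∈ trajFinset O A T, D ω * ∑ t ∈ Ico 1 T, γ t * r (featAct φ ω t) := by
  calc freqFA T φ γ D ⬝ᵥ r
      = (∑ t ∈ Ico 1 T, γ t)⁻¹ * ∑ t ∈ Ico 1 T, γ t * (probFA T φ D t ⬝ᵥ r) := by
        simp only [dotProduct, freqFA, mul_sum, sum_mul]
        rw [sum_comm]
        simp only [mul_assoc]
    _ = _ := by
        simp only [probFA_dotProduct, mul_sum]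
        rw [sum_comm]
        simp only [mul_left_comm]

theorem isDist_freqFA (T : ℕ) (φ : Hist O A → X) {γ : ℕ → ℝ} (hγ : ∀ t, 0 ≤ γ t)
    (hγsum : 0 < ∑ t ∈ Ico 1 T, γ t) {D : Hist O A → ℝ} (hD : IsTrajDist T D) :
    IsDist (freqFA T φ γ D) := by
  refine ⟨fun xa => ?_, ?_⟩
  · refine mul_nonneg (inv_nonneg.2 hγsum.le) (sum_nonneg fun t _ => mul_nonneg (hγ t) ?_)
    exact sum_nonneg fun ω _ => mul_nonneg (hD.1 ω) (by split_ifs <;> norm_num)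
  · have h := freqFA_dotProduct T φ γ D 1
    simp only [dotProduct_one, Pi.one_apply, mul_one, ← sum_mul, hD.2.2, one_mul] at h
    rw [h, inv_mul_cancel₀ hγsum.ne']

end Frequency

theorem freq_embedding_iff_markov_reward_general {O A X : Type*} [Fintype O] [Fintype A]
    [Fintype X] [DecidableEq O] [DecidableEq A] [DecidableEq X]
    [Inhabited A] [Inhabited O] [Nonempty X]
    (T : ℕ)
    (R : (Hist O A → ℝ) → (Hist O A → ℝ) → Prop)
    (φ : Hist O A → X) (γ : ℕ → ℝ) (hγ : ∀ t, 0 ≤ γ t)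
    (hγne : ∃ t ∈ Finset.Ico 1 T, γ t ≠ 0) :
    (∃ R₀ : ((X × A) → ℝ) → ((X × A) → ℝ) → Prop,
      ((∀ p, IsDist p → R₀ p p) ∧
       (∀ p q s, IsDist p → IsDist q → IsDist s → R₀ p q → R₀ q s → R₀ p s) ∧
       (∀ p q, IsDist p → IsDist q → (R₀ p q ∨ R₀ q p)) ∧
       (∀ α : ℝ, 0 < α → α < 1 → ∀ p q s, IsDist p → IsDist q → IsDist s →
         (R₀ p q ↔ R₀ (mix α p s) (mix α q s))) ∧
       (∀ p q s, IsDist p → IsDist q → IsDist s → R₀ p q → R₀ q s →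
         ∃ α : ℝ, 0 ≤ α ∧ α ≤ 1 ∧ R₀ (mix α p s) q ∧ R₀ q (mix α p s))) ∧
      (∀ D D' : Hist O A → ℝ, IsTrajDist T D → IsTrajDist T D' →
        (R D D' ↔ R₀ (freqFA T φ γ D) (freqFA T φ γ D'))))
    ↔
    (∃ r : X × A → ℝ,
      ∀ D D' : Hist O A → ℝ, IsTrajDist T D → IsTrajDist T D' →
        (R D D' ↔
          (∑ ω ∈ trajFinset O A T, D ω *
              ∑ t ∈ Finset.Ico 1 T, γ t * r (featAct φ ω t)) ≤
          (∑ ω ∈ trajFinset O A T, D' ω *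
              ∑ t ∈ Finset.Ico 1 T, γ t * r (featAct φ ω t)))) := by
  have hγsum : 0 < ∑ t ∈ Ico 1 T, γ t := by
    obtain ⟨t, ht, hγt⟩ := hγne
    exact sum_pos' (fun t _ => hγ t) ⟨t, ht, (hγ t).lt_of_ne' hγt⟩
  have hreward : ∀ (r : X × A → ℝ) (D D' : Hist O A → ℝ),
      (∑ ω ∈ trajFinset O A T, D ω * ∑ t ∈ Ico 1 T, γ t * r (featAct φ ω t)) ≤
          ∑ ω ∈ trajFinset O A T, D' ω * ∑ t ∈ Ico 1 T, γ t * r (featAct φ ω t) ↔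
        freqFA T φ γ D ⬝ᵥ r ≤ freqFA T φ γ D' ⬝ᵥ r := fun r D D' => by
    rw [freqFA_dotProduct, freqFA_dotProduct, mul_le_mul_iff_right₀ (inv_pos.2 hγsum)]
  constructor
  · rintro ⟨R₀, ⟨hrefl, htrans, htotal, hindep, hinterp⟩, hemb⟩
    obtain ⟨u, hu⟩ := IsVNMPreorder.exists_dotProduct_le_iff
      ⟨@hrefl, @htrans, @htotal, @hindep, @hinterp⟩
    refine ⟨u, fun D D' hD hD' => ?_⟩
    rw [hemb D D' hD hD', hu _ _ (isDist_freqFA T φ hγ hγsum hD) (isDist_freqFA T φ hγ hγsum hD'),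
      hreward]
  · rintro ⟨r, hr⟩
    obtain ⟨hrefl, htrans, htotal, hindep, hinterp⟩ := isVNMPreorder_dotProduct r
    exact ⟨_, ⟨@hrefl, @htrans, @htotal, @hindep, @hinterp⟩,
      fun D D' hD hD' => by rw [hr D D' hD hD', hreward]⟩

/-- `≼` embeds via `(φ,γ)`-frequency into a total convex preorder
satisfying interpolation iff it is expressed by a `γ`-weighted feature-action
(Markov) reward. -/
theorem freq_embedding_iff_markov_reward {O A X : Type*} [Fintype O] [Fintype A]
    [Fintype X] [DecidableEq O] [DecidableEq A] [DecidableEq X]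
    [Inhabited A] [Inhabited O] [Nonempty X]
    (T : ℕ) (ρ0 : O → ℝ) (ρ : Hist O A → A → O → ℝ) (henv : IsEnv ρ0 ρ)
    (R : (Hist O A → ℝ) → (Hist O A → ℝ) → Prop)
    (φ : Hist O A → X) (γ : ℕ → ℝ) (hγ : ∀ t, 0 ≤ γ t)
    (hγne : ∃ t ∈ Finset.Ico 1 T, γ t ≠ 0) :
    (∃ R₀ : ((X × A) → ℝ) → ((X × A) → ℝ) → Prop,
      ((∀ p, IsDist p → R₀ p p) ∧
       (∀ p q s, IsDist p → IsDist q → IsDist s → R₀ p q → R₀ q s → R₀ p s) ∧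
       (∀ p q, IsDist p → IsDist q → (R₀ p q ∨ R₀ q p)) ∧
       (∀ α : ℝ, 0 < α → α < 1 → ∀ p q s, IsDist p → IsDist q → IsDist s →
         (R₀ p q ↔ R₀ (mix α p s) (mix α q s))) ∧
       (∀ p q s, IsDist p → IsDist q → IsDist s → R₀ p q → R₀ q s →
         ∃ α : ℝ, 0 ≤ α ∧ α ≤ 1 ∧ R₀ (mix α p s) q ∧ R₀ q (mix α p s))) ∧
      (∀ D D' : Hist O A → ℝ, IsTrajDist T D → IsTrajDist T D' →
        (R D D' ↔ R₀ (freqFA T φ γ D) (freqFA T φ γ D'))))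
    ↔
    (∃ r : X × A → ℝ,
      ∀ D D' : Hist O A → ℝ, IsTrajDist T D → IsTrajDist T D' →
        (R D D' ↔
          (∑ ω ∈ trajFinset O A T, D ω *
              ∑ t ∈ Finset.Ico 1 T, γ t * r (featAct φ ω t)) ≤
          (∑ ω ∈ trajFinset O A T, D' ω *
              ∑ t ∈ Finset.Ico 1 T, γ t * r (featAct φ ω t)))) :=
  freq_embedding_iff_markov_reward_general T R φ γ hγ hγne
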